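/- In R-Wythoff, for all integers a, b with 4 ≤ a ≤ b, the Sprague–Grundy value satisfies G_R(a, b) ≥ b − 2a + 1. -/
import Mathlib


noncomputable section

/-- The golden ratio. -/
def phi : ℝ := (1 + Real.sqrt 5) / 2

/-- Minimum excluded value of a set of naturals. -/
def mex (S : Set ℕ) : ℕ := sInf {n | n ∉ S}

/-- Sort a pair of naturals into nondecreasing order. -/
def sortPair (p : ℕ × ℕ) : ℕ × ℕ := (min p.1 p.2, max p.1 p.2)

/-- Moves of R-Wythoff (positions are unordered pairs of pile sizes): remove a
positive number of tokens from the larger pile (either pile if equal), or an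
equal positive number of tokens from both piles. -/
def RMove (p q : ℕ × ℕ) : Prop :=
  (∃ t < max p.1 p.2, sortPair q = sortPair (min p.1 p.2, t)) ∨
  (∃ k, 0 < k ∧ k ≤ min p.1 p.2 ∧ sortPair q = (min p.1 p.2 - k, max p.1 p.2 - k))

lemma RMove.sum_lt {p q : ℕ × ℕ} (h : RMove p q) : q.1 + q.2 < p.1 + p.2 := by
  rcases h with ⟨t, ht, hq⟩ | ⟨k, hk0, hk, hq⟩ <;>
  · simp only [sortPair, Prod.mk.injEq] at hq
    omega

/-- Sprague–Grundy function of R-Wythoff. -/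
noncomputable def grundyR : ℕ × ℕ → ℕ
  | p => mex {v | ∃ q, ∃ _ : RMove p q, grundyR q = v}
termination_by p => p.1 + p.2
decreasing_by exact RMove.sum_lt (by assumption)

/-- P-positions of R-Wythoff: a position is P iff every move leads to a
non-P (i.e. N) position. -/
def RPPos : ℕ × ℕ → Prop
  | p => ∀ q, RMove p q → ¬ RPPos q
termination_by p => p.1 + p.2
decreasing_by exact RMove.sum_lt (by assumption)

lemma grundyR_eq (p : ℕ × ℕ) : grundyR p = mex {v | ∃ q, RMove p q ∧ grundyR q = v} := by
  rw [grundyR]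
  simp only [exists_prop]

lemma mex_eq_of {S : Set ℕ} {n : ℕ} (h1 : ∀ m < n, m ∈ S) (h2 : n ∉ S) : mex S = n := by
  unfold mex
  refine le_antisymm (Nat.sInf_le h2) ?_
  by_contra h
  push_neg at h
  have hm := Nat.sInf_mem (s := {n | n ∉ S}) ⟨n, h2⟩
  exact hm (h1 _ h)

lemma sortPair_of_le {a b : ℕ} (h : a ≤ b) : sortPair (a, b) = (a, b) := by
  simp [sortPair, min_eq_left h, max_eq_right h]

lemma RMove_swap {x y : ℕ} (q : ℕ × ℕ) : RMove (x, y) q ↔ RMove (y, x) q := by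
  simp [RMove, min_comm, max_comm]

lemma grundyR_swap (x y : ℕ) : grundyR (x, y) = grundyR (y, x) := by
  rw [grundyR_eq, grundyR_eq]
  congr 1
  ext v
  simp only [Set.mem_setOf_eq]
  constructor <;> rintro ⟨q, h, rfl⟩
  · exact ⟨q, (RMove_swap q).mpr h, rfl⟩
  · exact ⟨q, (RMove_swap q).mp h, rfl⟩

lemma grundyR_sortPair (q : ℕ × ℕ) : grundyR (sortPair q) = grundyR q := by
  rcases le_total q.1 q.2 with h | h
  · rw [show sortPair q = q by simp [sortPair, min_eq_left h, max_eq_right h]]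
  · rw [show sortPair q = (q.2, q.1) by simp [sortPair, min_eq_right h, max_eq_left h]]
    rw [grundyR_swap]

lemma grundy_le_aux : ∀ (n : ℕ) (p : ℕ × ℕ), p.1 + p.2 ≤ n → grundyR p ≤ p.1 + p.2 := by
  intro n
  induction n using Nat.strong_induction_on with
  | _ n ih =>
    intro p hp
    rw [grundyR_eq]
    apply Nat.sInf_le
    simp only [Set.mem_setOf_eq]
    rintro ⟨q, hm, hv⟩
    have h1 := hm.sum_lt
    have h2 : grundyR q ≤ q.1 + q.2 := by
      rcases n with _ | n
      · omega
      · exact ih n (by omega) q (by omega)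
    omega

lemma grundy_le (p : ℕ × ℕ) : grundyR p ≤ p.1 + p.2 := grundy_le_aux _ p le_rfl

lemma grundy_not_follower (p : ℕ × ℕ) : ¬ ∃ q, RMove p q ∧ grundyR q = grundyR p := by
  intro ⟨q, hm, hv⟩
  have hne : (p.1 + p.2) ∈ {n | n ∉ {v | ∃ q, RMove p q ∧ grundyR q = v}} := by
    simp only [Set.mem_setOf_eq]
    rintro ⟨q', hm', hv'⟩
    have := grundy_le q'
    have := hm'.sum_lt
    omega
  have hmem := Nat.sInf_mem (s := {n | n ∉ {v | ∃ q, RMove p q ∧ grundyR q = v}}) ⟨_, hne⟩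
  exact hmem ⟨q, hm, by rw [hv, grundyR_eq]; rfl⟩

lemma exists_follower_of_lt {p : ℕ × ℕ} {w : ℕ} (h : w < grundyR p) :
    ∃ q, RMove p q ∧ grundyR q = w := by
  by_contra hc
  have : w ∈ {n | n ∉ {v | ∃ q, RMove p q ∧ grundyR q = v}} := hc
  have := Nat.sInf_le this
  rw [grundyR_eq] at h
  exact absurd h (by unfold mex at *; omega)

lemma row0 : ∀ y, grundyR (0, y) = y := by
  intro y
  induction y using Nat.strong_induction_on with
  | _ y ih =>
    rw [grundyR_eq]
    apply mex_eq_of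
    · intro m hm
      refine ⟨(0, m), Or.inl ⟨m, ?_, ?_⟩, ih m hm⟩
      · simpa using hm
      · simp [sortPair]
    · rintro ⟨q, ⟨t, ht, hq⟩ | ⟨k, hk0, hk, hq⟩, hv⟩
      · have ht' : t < y := by simpa using ht
        have h1 : sortPair q = (0, t) := by
          rw [hq]; simp [sortPair]
        have h2 : grundyR q = t := by
          rw [← grundyR_sortPair q, h1, ih t ht']
        omega
      · have : k ≤ 0 := by simpa using hk
        omega

lemma move_take {a b t : ℕ} (hab : a ≤ b) (ht : t < b) : RMove (a, b) (sortPair (a, t)) := by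
  left
  refine ⟨t, ?_, ?_⟩
  · show t < max a b
    omega
  · show sortPair (sortPair (a, t)) = sortPair (min a b, t)
    simp only [sortPair, Prod.mk.injEq]
    constructor <;> omega

lemma move_diag {a b k : ℕ} (hab : a ≤ b) (hk0 : 0 < k) (hk : k ≤ a) :
    RMove (a, b) (a - k, b - k) := by
  right
  refine ⟨k, hk0, ?_, ?_⟩
  · show k ≤ min a b
    omega
  · show sortPair (a - k, b - k) = (min a b - k, max a b - k)
    simp only [sortPair, Prod.mk.injEq]
    constructor <;> omega

lemma move_cases {a b : ℕ} (hab : a ≤ b) {q : ℕ × ℕ} (h : RMove (a, b) q) :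
    (∃ t < b, sortPair q = sortPair (a, t)) ∨
    (∃ k, 0 < k ∧ k ≤ a ∧ sortPair q = (a - k, b - k)) := by
  rcases h with ⟨t, ht, hq⟩ | ⟨k, hk0, hk, hq⟩
  · left
    refine ⟨t, by simp at ht; omega, ?_⟩
    rw [hq]
    simp only [sortPair, Prod.mk.injEq]
    constructor <;> omega
  · right
    refine ⟨k, hk0, by simp at hk; omega, ?_⟩
    rw [hq]
    simp only [Prod.mk.injEq]
    constructor <;> omega

lemma G10 : grundyR (1, 0) = 1 := by rw [grundyR_swap]; exact row0 1

lemma G11 : grundyR (1, 1) = 2 := by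
  rw [grundyR_eq]
  apply mex_eq_of
  · intro m hm
    interval_cases m
    · exact ⟨(0, 0), move_diag le_rfl one_pos le_rfl, row0 0⟩
    · exact ⟨sortPair (1, 0), move_take le_rfl one_pos, by rw [grundyR_sortPair]; exact G10⟩
  · rintro ⟨q, hm, hv⟩
    rcases move_cases le_rfl hm with ⟨t, ht, hq⟩ | ⟨k, hk0, hk, hq⟩
    · have hgq : grundyR q = grundyR (1, t) := by rw [← grundyR_sortPair q, hq, grundyR_sortPair]
      interval_cases t
      rw [hgq, G10] at hv
      omega
    · have hk1 : k = 1 := by omega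
      subst hk1
      have hgq : grundyR q = grundyR (0, 0) := by rw [← grundyR_sortPair q, hq]
      rw [hgq, row0] at hv
      omega

lemma G12 : grundyR (1, 2) = 0 := by
  rw [grundyR_eq]
  apply mex_eq_of
  · omega
  · rintro ⟨q, hm, hv⟩
    rcases move_cases (by omega) hm with ⟨t, ht, hq⟩ | ⟨k, hk0, hk, hq⟩
    · have hgq : grundyR q = grundyR (1, t) := by rw [← grundyR_sortPair q, hq, grundyR_sortPair]
      interval_cases t
      · rw [hgq, G10] at hv; omega
      · rw [hgq, G11] at hv; omega
    · have hk1 : k = 1 := by omega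
      subst hk1
      have hgq : grundyR q = grundyR (0, 1) := by rw [← grundyR_sortPair q, hq]
      rw [hgq, row0] at hv
      omega

lemma row1 : ∀ y, 3 ≤ y → grundyR (1, y) = y := by
  intro y
  induction y using Nat.strong_induction_on with
  | _ y ih =>
    intro hy
    rw [grundyR_eq]
    apply mex_eq_of
    · intro m hm
      rcases Nat.lt_or_ge m 3 with h3 | h3
      · interval_cases m
        · exact ⟨sortPair (1, 2), move_take (by omega) (by omega),
            by rw [grundyR_sortPair]; exact G12⟩
        · exact ⟨sortPair (1, 0), move_take (by omega) (by omega),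
            by rw [grundyR_sortPair]; exact G10⟩
        · exact ⟨sortPair (1, 1), move_take (by omega) (by omega),
            by rw [grundyR_sortPair]; exact G11⟩
      · exact ⟨sortPair (1, m), move_take (by omega) hm,
          by rw [grundyR_sortPair]; exact ih m hm h3⟩
    · rintro ⟨q, hm, hv⟩
      rcases move_cases (by omega) hm with ⟨t, ht, hq⟩ | ⟨k, hk0, hk, hq⟩
      · have hgq : grundyR q = grundyR (1, t) := by rw [← grundyR_sortPair q, hq, grundyR_sortPair]
        rcases Nat.lt_or_ge t 3 with h3 | h3
        · interval_cases t
          · rw [hgq, G10] at hv; omega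
          · rw [hgq, G11] at hv; omega
          · rw [hgq, G12] at hv; omega
        · rw [hgq, ih t ht h3] at hv; omega
      · have hk1 : k = 1 := by omega
        subst hk1
        have hgq : grundyR q = grundyR (0, y - 1) := by rw [← grundyR_sortPair q, hq]
        rw [hgq, row0] at hv
        omega

lemma G20 : grundyR (2, 0) = 2 := by rw [grundyR_swap]; exact row0 2
lemma G21 : grundyR (2, 1) = 0 := by rw [grundyR_swap]; exact G12

lemma G22 : grundyR (2, 2) = 1 := by
  rw [grundyR_eq]
  apply mex_eq_of
  · intro m hm
    interval_cases m
    exact ⟨sortPair (2, 1), move_take le_rfl one_lt_two, by rw [grundyR_sortPair]; exact G21⟩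
  · rintro ⟨q, hm, hv⟩
    rcases move_cases le_rfl hm with ⟨t, ht, hq⟩ | ⟨k, hk0, hk, hq⟩
    · have hgq : grundyR q = grundyR (2, t) := by rw [← grundyR_sortPair q, hq, grundyR_sortPair]
      interval_cases t
      · rw [hgq, G20] at hv; omega
      · rw [hgq, G21] at hv; omega
    · interval_cases k
      · have hgq : grundyR q = grundyR (1, 1) := by rw [← grundyR_sortPair q, hq]
        rw [hgq, G11] at hv; omega
      · have hgq : grundyR q = grundyR (0, 0) := by rw [← grundyR_sortPair q, hq]
        rw [hgq, row0] at hv; omega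

lemma row2 : ∀ y, 3 ≤ y → grundyR (2, y) = y := by
  intro y
  induction y using Nat.strong_induction_on with
  | _ y ih =>
    intro hy
    rw [grundyR_eq]
    apply mex_eq_of
    · intro m hm
      rcases Nat.lt_or_ge m 3 with h3 | h3
      · interval_cases m
        · exact ⟨sortPair (2, 1), move_take (by omega) (by omega),
            by rw [grundyR_sortPair]; exact G21⟩
        · exact ⟨sortPair (2, 2), move_take (by omega) (by omega),
            by rw [grundyR_sortPair]; exact G22⟩
        · exact ⟨sortPair (2, 0), move_take (by omega) (by omega),
            by rw [grundyR_sortPair]; exact G20⟩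
      · exact ⟨sortPair (2, m), move_take (by omega) hm,
          by rw [grundyR_sortPair]; exact ih m hm h3⟩
    · rintro ⟨q, hm, hv⟩
      rcases move_cases (by omega) hm with ⟨t, ht, hq⟩ | ⟨k, hk0, hk, hq⟩
      · have hgq : grundyR q = grundyR (2, t) := by rw [← grundyR_sortPair q, hq, grundyR_sortPair]
        rcases Nat.lt_or_ge t 3 with h3 | h3
        · interval_cases t
          · rw [hgq, G20] at hv; omega
          · rw [hgq, G21] at hv; omega
          · rw [hgq, G22] at hv; omega
        · rw [hgq, ih t ht h3] at hv; omega
      · interval_cases k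
        · have hgq : grundyR q = grundyR (1, y - 1) := by rw [← grundyR_sortPair q, hq]
          rcases Nat.lt_or_ge (y - 1) 3 with h3 | h3
          · have : y = 3 := by omega
            subst this
            rw [hgq, G12] at hv
            omega
          · rw [hgq, row1 (y - 1) h3] at hv
            omega
        · have hgq : grundyR q = grundyR (0, y - 2) := by rw [← grundyR_sortPair q, hq]
          rw [hgq, row0] at hv
          omega

lemma grundy_shift {q : ℕ × ℕ} {x y x' y' : ℕ} (h : sortPair q = (x, y)) (hx : x = x')
    (hy : y = y') : grundyR q = grundyR (x', y') := by
  subst hx; subst hy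
  rw [← grundyR_sortPair q, h]

lemma row3_ge : ∀ y : ℕ, (y : ℤ) - 5 ≤ (grundyR (3, y) : ℤ) := by
  intro y
  induction y using Nat.strong_induction_on with
  | _ y ih =>
    rcases Nat.lt_or_ge y 6 with h6 | h6
    · omega
    · have key : ∀ w : ℕ, w + 6 ≤ y → ∃ q, RMove (3, y) q ∧ grundyR q = w := by
        intro w hw
        by_contra hcon
        push_neg at hcon
        have hm1 : RMove (3, y) (sortPair (3, y - 1)) := move_take (by omega) (by omega)
        rw [sortPair_of_le (by omega)] at hm1
        have hne := hcon _ hm1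
        have hih := ih (y - 1) (by omega)
        have hcast : ((y - 1 : ℕ) : ℤ) = (y : ℤ) - 1 := by omega
        have hgt : w < grundyR (3, y - 1) := by omega
        obtain ⟨q, hmq, hq⟩ := exists_follower_of_lt hgt
        rcases move_cases (by omega : 3 ≤ y - 1) hmq with ⟨t, ht, hqs⟩ | ⟨k, hk0, hk, hqs⟩
        · refine hcon q ?_ hq
          left
          refine ⟨t, ?_, ?_⟩
          · show t < max 3 y
            omega
          · rw [hqs]
            simp only [sortPair, Prod.mk.injEq]
            constructor <;> omega
        · interval_cases k
          · have hgq : grundyR q = grundyR (2, y - 2) := grundy_shift hqs (by omega) (by omega)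
            rw [hgq, row2 _ (by omega)] at hq
            omega
          · have hgq : grundyR q = grundyR (1, y - 3) := grundy_shift hqs (by omega) (by omega)
            rw [hgq, row1 _ (by omega)] at hq
            omega
          · have hgq : grundyR q = grundyR (0, y - 4) := grundy_shift hqs (by omega) (by omega)
            rw [hgq, row0] at hq
            omega
      by_contra hlt
      push_neg at hlt
      have h1 : grundyR (3, y) + 6 ≤ y := by omega
      obtain ⟨q, hmq, hq⟩ := key _ h1
      exact grundy_not_follower (3, y) ⟨q, hmq, hq⟩

lemma main_key : ∀ N a b w : ℕ, a + b ≤ N → 4 ≤ a → a ≤ b → w + 2 * a ≤ b →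
    ∃ q, RMove (a, b) q ∧ grundyR q = w := by
  intro N
  induction N using Nat.strong_induction_on with
  | _ N ihN =>
    intro a b w hN ha hab hw
    by_contra hcon
    push_neg at hcon
    have hm1 : RMove (a, b) (a, b - 1) := by
      have := move_take (a := a) (b := b) hab (show b - 1 < b by omega)
      rwa [sortPair_of_le (by omega)] at this
    have hne := hcon _ hm1
    have hgt : w < grundyR (a, b - 1) := by
      rcases Nat.lt_or_ge (grundyR (a, b - 1)) w with hlt | hge
      · exfalso
        obtain ⟨q', hm', hv'⟩ := ihN (N - 1) (by omega) a (b - 1) (grundyR (a, b - 1)) (by omega) ha (by omega)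
          (by omega)
        exact grundy_not_follower (a, b - 1) ⟨q', hm', hv'⟩
      · omega
    obtain ⟨q, hmq, hq⟩ := exists_follower_of_lt hgt
    rcases move_cases (show a ≤ b - 1 by omega) hmq with ⟨t, ht, hqs⟩ | ⟨k, hk0, hk, hqs⟩
    · refine hcon q ?_ hq
      left
      refine ⟨t, ?_, ?_⟩
      · show t < max a b
        omega
      · rw [hqs]
        simp only [sortPair, Prod.mk.injEq]
        constructor <;> omega
    · obtain ⟨r, hr⟩ : ∃ r, a - k = r := ⟨_, rfl⟩
      rcases Nat.lt_or_ge r 4 with h4 | h4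
      · interval_cases r
        · have hgq : grundyR q = grundyR (0, b - 1 - a) := grundy_shift hqs (by omega) (by omega)
          rw [hgq, row0] at hq
          omega
        · have hgq : grundyR q = grundyR (1, b - a) := grundy_shift hqs (by omega) (by omega)
          rw [hgq, row1 _ (by omega)] at hq
          omega
        · have hgq : grundyR q = grundyR (2, b - a + 1) := grundy_shift hqs (by omega) (by omega)
          rw [hgq, row2 _ (by omega)] at hq
          omega
        · have hgq : grundyR q = grundyR (3, b - a + 2) := grundy_shift hqs (by omega) (by omega)
          have h3 := row3_ge (b - a + 2)
          rw [hgq] at hq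
          omega
      · have hgq : grundyR q = grundyR (a - k, b - 1 - k) := grundy_shift hqs rfl rfl
        obtain ⟨q', hm', hv'⟩ := ihN (N - 1) (by omega) (a - k) (b - 1 - k) w (by omega)
          (by omega) (by omega) (by omega)
        refine grundy_not_follower (a - k, b - 1 - k) ⟨q', hm', ?_⟩
        rw [hv', ← hq, hgq]

/-- In R-Wythoff, `G_R(a, b) ≥ b - 2a + 1` for `4 ≤ a ≤ b`. -/
theorem RWythoff_lower_bound (a b : ℕ) (ha : 4 ≤ a) (hab : a ≤ b) :
    (b : ℤ) - 2 * a + 1 ≤ (grundyR (a, b) : ℤ) := by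
  rcases Nat.lt_or_ge b (2 * a) with h | h
  · omega
  · by_contra hlt
    push_neg at hlt
    have hw : grundyR (a, b) + 2 * a ≤ b := by omega
    obtain ⟨q, hm, hv⟩ := main_key (a + b) a b (grundyR (a, b)) le_rfl ha hab hw
    exact grundy_not_follower (a, b) ⟨q, hm, hv⟩


end
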